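/- arXiv:1009.0097 — 2 statements merged into one kernel-verified Lean document; each statement's English description precedes it below -/
import Mathlib

section
/- For all integers 1 ≤ k ≤ n and all x ∈ [0,1], the function x ↦ B_{k,n}(x,q) is differentiable and its derivative at x equals n·(B_{k-1,n-1}(x,q) − B_{k,n-1}(x,q))·(log q/(q−1))·q^x. -/
/-- The q-number `[x]_q = (1 - q^x)/(1 - q)` for real `x`. -/
noncomputable def qNum (q x : ℝ) : ℝ := (1 - q ^ x) / (1 - q)

/-- The q-Bernstein polynomial `B_{k,n}(x,q) = C(n,k)·[x]_q^k·[1-x]_{1/q}^{n-k}`. -/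
noncomputable def qBernstein (q : ℝ) (k n : ℕ) (x : ℝ) : ℝ :=
  (n.choose k : ℝ) * qNum q x ^ k * qNum q⁻¹ (1 - x) ^ (n - k)

/-!
Since `[1-x]_{1/q} = 1 - [x]_q`, the q-Bernstein polynomial is the classical Bernstein
polynomial `C(n,k) X^k (1-X)^(n-k)` evaluated at `[x]_q`. The claim is then the chain rule,
combining the classical identity `B'_{k,n} = n (B_{k-1,n-1} - B_{k,n-1})` with
`d/dx [x]_q = (log q / (q - 1)) q^x`.
-/

open Polynomial

lemma qNum_inv_one_sub {q : ℝ} (hq : 0 < q) (hq1 : q ≠ 1) (t : ℝ) :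
    qNum q⁻¹ (1 - t) = 1 - qNum q t := by
  have hq1' : q - 1 ≠ 0 := sub_ne_zero.mpr hq1
  unfold qNum
  rw [Real.inv_rpow hq.le, Real.rpow_sub hq, Real.rpow_one]
  field_simp
  ring

lemma hasDerivAt_qNum {q : ℝ} (hq : 0 < q) (x : ℝ) :
    HasDerivAt (qNum q) (Real.log q / (q - 1) * q ^ x) x := by
  have h := ((Real.hasStrictDerivAt_const_rpow hq x).hasDerivAt.const_sub 1).div_const (1 - q)
  rwa [neg_div, ← div_neg, neg_sub, mul_div_assoc, mul_comm] at h

lemma qBernstein_eq_eval {q : ℝ} (hq : 0 < q) (hq1 : q ≠ 1) (k n : ℕ) (x : ℝ) :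
    qBernstein q k n x = (bernsteinPolynomial ℝ n k).eval (qNum q x) := by
  simp [qBernstein, bernsteinPolynomial, qNum_inv_one_sub hq hq1]

theorem qBernstein_hasDerivAt_general (q : ℝ) (hq : 0 < q) (hq1 : q < 1)
    (n k : ℕ) (hk1 : 1 ≤ k) (x : ℝ) :
    HasDerivAt (fun t : ℝ => qBernstein q k n t)
      ((n : ℝ) * (qBernstein q (k - 1) (n - 1) x - qBernstein q k (n - 1) x)
        * (Real.log q / (q - 1)) * q ^ x) x := by
  obtain ⟨j, rfl⟩ : ∃ j, k = j + 1 := ⟨k - 1, by omega⟩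
  simp only [qBernstein_eq_eval hq hq1.ne, Nat.add_sub_cancel]
  have h := ((bernsteinPolynomial ℝ n (j + 1)).hasDerivAt (qNum q x)).comp x
    (hasDerivAt_qNum hq x)
  rw [bernsteinPolynomial.derivative_succ, eval_mul, eval_natCast, eval_sub] at h
  exact h.congr_deriv (by ring)

/-- For `1 ≤ k ≤ n`, the derivative of `x ↦ B_{k,n}(x,q)` at `x ∈ [0,1]` equals
`n·(B_{k-1,n-1}(x,q) − B_{k,n-1}(x,q))·(log q/(q−1))·q^x`. -/
theorem qBernstein_hasDerivAt (q : ℝ) (hq : 0 < q) (hq1 : q < 1)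
    (n k : ℕ) (hk1 : 1 ≤ k) (hk : k ≤ n) (x : ℝ) (hx : x ∈ Set.Icc (0 : ℝ) 1) :
    HasDerivAt (fun t : ℝ => qBernstein q k n t)
      ((n : ℝ) * (qBernstein q (k - 1) (n - 1) x - qBernstein q k (n - 1) x)
        * (Real.log q / (q - 1)) * q ^ x) x :=
  qBernstein_hasDerivAt_general q hq hq1 n k hk1 x
end

section
/- For every integer n ≥ 1, the q-Euler polynomial evaluated at 2 satisfies E_{n,q}(2) = 2 + E_{n,q}; explicitly, (2/(1−q)^n)·∑_{l=0}^n C(n,l)·(−1)^l·q^{2l}/(1+q^l) = 2 + (2/(1−q)^n)·∑_{l=0}^n C(n,l)·(−1)^l/(1+q^l). -/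
/-- The q-Euler numbers `E_{n,q} = (2/(1−q)^n)·∑_{l=0}^n C(n,l)·(−1)^l/(1+q^l)`. -/
noncomputable def qEuler (q : ℝ) (n : ℕ) : ℝ :=
  (2 / (1 - q) ^ n) * ∑ l ∈ Finset.range (n + 1), (n.choose l : ℝ) * (-1 : ℝ) ^ l / (1 + q ^ l)

/-- The q-Euler polynomials `E_{n,q}(x) = (2/(1−q)^n)·∑_{l=0}^n C(n,l)·(−1)^l·q^{lx}/(1+q^l)`. -/
noncomputable def qEulerPoly (q : ℝ) (n : ℕ) (x : ℝ) : ℝ :=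
  (2 / (1 - q) ^ n) *
    ∑ l ∈ Finset.range (n + 1),
      (n.choose l : ℝ) * (-1 : ℝ) ^ l * q ^ ((l : ℝ) * x) / (1 + q ^ l)

/-!
Since `a² / (1 + a) = 1 / (1 + a) + (a - 1)`, evaluating at `x = 2` splits each term of
`E_{n,q}(2)` into the corresponding term of `E_{n,q}` plus `C(n,l) (-1)^l (q^l - 1)`. By the
binomial theorem these extra terms sum to `(1 - q)^n - 0^n`, which is `(1 - q)^n` for `n ≥ 1`,
and the prefactor `2 / (1 - q)^n` turns it into `2`.
-/

open Finset

theorem sq_div_one_add {K : Type*} [Field K] {a : K} (ha : 1 + a ≠ 0) :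
    a ^ 2 / (1 + a) = 1 / (1 + a) + (a - 1) := by
  field_simp
  ring

theorem sum_range_choose_mul_neg_one_pow_mul_pow {R : Type*} [CommRing R] (x : R) (n : ℕ) :
    ∑ l ∈ range (n + 1), (n.choose l : R) * (-1) ^ l * x ^ l = (1 - x) ^ n := by
  rw [sub_eq_neg_add, add_pow]
  refine sum_congr rfl fun l _ => ?_
  rw [one_pow, mul_one, neg_pow]
  ring

theorem sum_range_choose_mul_neg_one_pow_mul_pow_sub_one {R : Type*} [CommRing R] (x : R)
    {n : ℕ} (hn : n ≠ 0) :
    ∑ l ∈ range (n + 1), (n.choose l : R) * (-1) ^ l * (x ^ l - 1) = (1 - x) ^ n := by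
  have h := sum_range_choose_mul_neg_one_pow_mul_pow (1 : R) n
  simp only [one_pow, mul_one, sub_self, zero_pow hn] at h
  simp only [mul_sub, mul_one, sum_sub_distrib, h, sum_range_choose_mul_neg_one_pow_mul_pow,
    sub_zero]

theorem sum_range_choose_mul_neg_one_pow_mul_sq_div {K : Type*} [Field K] {x : K}
    (hx : ∀ l : ℕ, 1 + x ^ l ≠ 0) {n : ℕ} (hn : n ≠ 0) :
    ∑ l ∈ range (n + 1), (n.choose l : K) * (-1) ^ l * (x ^ l) ^ 2 / (1 + x ^ l) =
      ∑ l ∈ range (n + 1), (n.choose l : K) * (-1) ^ l / (1 + x ^ l) + (1 - x) ^ n := by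
  have hterm : ∀ l : ℕ, (n.choose l : K) * (-1) ^ l * (x ^ l) ^ 2 / (1 + x ^ l) =
      (n.choose l : K) * (-1) ^ l / (1 + x ^ l) + (n.choose l : K) * (-1) ^ l * (x ^ l - 1) :=
    fun l => by rw [mul_div_assoc, sq_div_one_add (hx l)]; ring
  rw [sum_congr rfl fun l _ => hterm l, sum_add_distrib,
    sum_range_choose_mul_neg_one_pow_mul_pow_sub_one x hn]

/-- For `n ≥ 1`: `E_{n,q}(2) = 2 + E_{n,q}`. -/
theorem qEulerPoly_two (q : ℝ) (hq : 0 < q) (hq1 : q < 1) (n : ℕ) (hn : 1 ≤ n) :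
    qEulerPoly q n 2 = 2 + qEuler q n := by
  have hpow : ∀ l : ℕ, q ^ ((l : ℝ) * 2) = (q ^ l) ^ 2 := fun l => by
    rw [← pow_mul, ← Real.rpow_natCast]
    push_cast
    rfl
  have hsum := sum_range_choose_mul_neg_one_pow_mul_sq_div (x := q) (fun l => by positivity)
    (Nat.one_le_iff_ne_zero.mp hn)
  have hq1' : (1 - q) ^ n ≠ 0 := pow_ne_zero n (sub_ne_zero.mpr hq1.ne')
  unfold qEulerPoly qEuler
  simp only [hpow, hsum]
  field_simp
  ring
end
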